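/- For every θ ∈ [0,π] and r₀ ∈ (r₊,∞), the maximal solution r(t;θ,r₀) of the radial collapse ODE is defined for all t ≥ 0, is strictly decreasing, stays in (r₊,∞), and tends to r₊ as t → ∞. Moreover there exist smooth functions Ĉ₁, Ĉ₂ of (θ,r₀) ∈ [0,π]×(r₊,∞) such that for every compact interval [r₁,r₂] ⊂ (r₊,∞) there is a constant C > 0 with |(1/(2κ₊))·ln(r(t;θ,r₀) − r₊) + t + Ĉ₁(θ,r₀)·e^{−2κ₊t} − Ĉ₂(θ,r₀)| ≤ C·e^{−4κ₊t} for all t ≥ 0, θ ∈ [0,π] and r₀ ∈ [r₁,r₂]. -/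

import Mathlib

/-!
The equation is autonomous with `V < 0` on `(r₊, ∞)`, so it is solved by inverting a primitive
`T` of `-1/V`: `T (r t) = T r₀ - t`. Writing `Δ = (r - r₊)(r - r₋)` gives
`-1/V = σ² / (√(…) Δ) = (G₀ - sin² θ G₁) / (r - r₊)` with `G₀, G₁` smooth across `r₊`,
`G₀ r₊ = 1/(2κ₊)` and `G₁ r₊ = 0`. Hence `T r = log (r - r₊) / (2κ₊) + H r`, where `H` integrates
divided differences of `G₀, G₁`, so `H` is smooth and `H r = H'(r₊) (r - r₊) + O((r - r₊)²)`.
As `T → -∞` at `r₊`, the solution exists for all `t ≥ 0` and tends to `r₊`. Exponentiating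
`log (r - r₊) = 2κ₊ (T r₀ - t - H r)` gives `r - r₊ = e^{2κ₊ T r₀} e^{-2κ₊ t} (1 + O(r - r₊))`,
and substituting this into `H` gives the expansion with `Ĉ₂ = T r₀` and
`Ĉ₁ = H'(r₊) e^{2κ₊ Ĉ₂}`.
-/

noncomputable section
open Real Set

namespace Stmt4

/-- `Δ(r) = r² − 2Mr + a² + Q²`. -/
def Δ (M a Q r : ℝ) : ℝ := r ^ 2 - 2 * M * r + a ^ 2 + Q ^ 2

/-- Outer horizon `r₊`. -/
def rplus (M a Q : ℝ) : ℝ := M + Real.sqrt (M ^ 2 - (a ^ 2 + Q ^ 2))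

/-- Inner horizon `r₋`. -/
def rminus (M a Q : ℝ) : ℝ := M - Real.sqrt (M ^ 2 - (a ^ 2 + Q ^ 2))

/-- Surface gravity of the outer horizon. -/
def κplus (M a Q : ℝ) : ℝ :=
  (rplus M a Q - rminus M a Q) / (2 * ((rplus M a Q) ^ 2 + a ^ 2))

/-- `σ²(r,θ) = (r²+a²)² − a²Δ(r)sin²θ`. -/
def sigma2 (M a Q r θ : ℝ) : ℝ :=
  (r ^ 2 + a ^ 2) ^ 2 - a ^ 2 * Δ M a Q r * Real.sin θ ^ 2

/-- Right-hand side of the radial collapse ODE :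
`dr/dt = −√((r²+a²)(2Mr−Q²))·Δ(r)/σ²(r,θ)`. -/
def V (M a Q θ r : ℝ) : ℝ :=
  -Real.sqrt ((r ^ 2 + a ^ 2) * (2 * M * r - Q ^ 2)) * Δ M a Q r
    / sigma2 M a Q r θ

end Stmt4

open Filter Topology Function

section SlopeIntegral

variable {G : ℝ → ℝ} {m p : ℝ}

theorem abs_dslope_sub_deriv_le {b : ℝ} {K : NNReal}
    (hG : ∀ x ∈ Icc p b, DifferentiableAt ℝ G x) (hK : LipschitzOnWith K (deriv G) (Icc p b))
    {s : ℝ} (hs : s ∈ Icc p b) : |dslope G p s - deriv G p| ≤ K * (s - p) := by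
  rcases eq_or_lt_of_le hs.1 with rfl | hps
  · simp [dslope_same]
  have hp : p ∈ Icc p b := ⟨le_rfl, hps.le.trans hs.2⟩
  have hsub : Icc p s ⊆ Icc p b := Icc_subset_Icc_right hs.2
  have hmv : ‖(G s - deriv G p * s) - (G p - deriv G p * p)‖ ≤ K * (s - p) * ‖s - p‖ := by
    refine (convex_Icc p s).norm_image_sub_le_of_norm_hasDerivWithin_le
      (f := fun u => G u - deriv G p * u) (f' := fun u => deriv G u - deriv G p)
      (fun u hu => ?_) (fun u hu => ?_)
      ⟨le_rfl, hps.le⟩ ⟨hps.le, le_rfl⟩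
    · exact (((hG u (hsub hu)).hasDerivAt).sub ((hasDerivAt_id u).const_mul _)
        |>.congr_deriv (by simp)).hasDerivWithinAt
    · have := hK.dist_le_mul u (hsub hu) p hp
      rw [Real.dist_eq, Real.dist_eq, abs_of_nonneg (sub_nonneg.2 hu.1)] at this
      exact this.trans (by gcongr; exact hu.2)
  have hid : (s - p) * (dslope G p s - deriv G p)
      = (G s - deriv G p * s) - (G p - deriv G p * p) := by
    rw [mul_sub, ← smul_eq_mul, sub_smul_dslope]; ring
  rw [← hid, norm_mul, mul_comm, Real.norm_eq_abs] at hmv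
  exact le_of_mul_le_mul_right hmv (norm_pos_iff.2 (sub_pos.2 hps).ne')

def slopeIntegral (G : ℝ → ℝ) (p r : ℝ) : ℝ := ∫ s in p..r, dslope G p s

theorem continuousOn_dslope_Ioi (hG : ContDiffOn ℝ 1 G (Ioi m)) (hp : m < p) :
    ContinuousOn (dslope G p) (Ioi m) :=
  (continuousOn_dslope (Ioi_mem_nhds hp)).2
    ⟨hG.continuousOn, (hG.differentiableOn one_ne_zero p hp).differentiableAt (Ioi_mem_nhds hp)⟩

theorem hasDerivAt_slopeIntegral (hG : ContDiffOn ℝ 1 G (Ioi m)) (hp : m < p) {r : ℝ}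
    (hr : m < r) : HasDerivAt (slopeIntegral G p) (dslope G p r) r := by
  have hc := continuousOn_dslope_Ioi hG hp
  refine intervalIntegral.integral_hasDerivAt_right ?_
    (hc.stronglyMeasurableAtFilter isOpen_Ioi r hr) (hc.continuousAt (Ioi_mem_nhds hr))
  exact (hc.mono fun x hx => lt_of_lt_of_le (lt_min hp hr) hx.1).intervalIntegrable

theorem contDiffOn_slopeIntegral (hG : ContDiffOn ℝ (⊤ : ℕ∞) G (Ioi m)) (hp : m < p) :
    ContDiffOn ℝ (⊤ : ℕ∞) (slopeIntegral G p) (Ioi p) := by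
  have hG1 : ContDiffOn ℝ 1 G (Ioi m) := hG.of_le (mod_cast le_top)
  have hsub : Ioi p ⊆ Ioi m := Ioi_subset_Ioi hp.le
  rw [contDiffOn_infty_iff_deriv_of_isOpen isOpen_Ioi]
  refine ⟨fun r hr => (hasDerivAt_slopeIntegral hG1 hp (hsub hr)).differentiableAt
    |>.differentiableWithinAt, ?_⟩
  have hslope : ContDiffOn ℝ (⊤ : ℕ∞) (fun r => (G r - G p) / (r - p)) (Ioi p) :=
    ((hG.mono hsub).sub contDiffOn_const).div (contDiffOn_id.sub contDiffOn_const)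
      fun r hr => (sub_pos.2 hr).ne'
  refine hslope.congr fun r hr => ?_
  rw [(hasDerivAt_slopeIntegral hG1 hp (hsub hr)).deriv, dslope_of_ne _ (ne_of_gt hr),
    slope_def_field]

theorem exists_abs_slopeIntegral_sub_le (hG : ContDiffOn ℝ 2 G (Ioi m)) (hp : m < p) (b : ℝ) :
    ∃ L, ∀ r ∈ Icc p b, |slopeIntegral G p r - deriv G p * (r - p)| ≤ L * (r - p) ^ 2 := by
  have hsub : Icc p b ⊆ Ioi m := fun x hx => lt_of_lt_of_le hp hx.1
  obtain ⟨K, hK⟩ := ((hG.deriv_of_isOpen isOpen_Ioi (by norm_num : (1 : WithTop ℕ∞) + 1 ≤ 2)).mono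
    hsub).exists_lipschitzOnWith one_ne_zero (convex_Icc p b) isCompact_Icc
  have hdiff : ∀ x ∈ Icc p b, DifferentiableAt ℝ G x := fun x hx =>
    (hG.differentiableOn two_ne_zero x (hsub hx)).differentiableAt (Ioi_mem_nhds (hsub hx))
  refine ⟨K, fun r hr => ?_⟩
  have hint : IntervalIntegrable (dslope G p) MeasureTheory.volume p r :=
    ((continuousOn_dslope_Ioi (hG.of_le (by norm_num)) hp).mono fun x hx => by
      rw [uIcc_of_le hr.1] at hx; exact hsub ⟨hx.1, hx.2.trans hr.2⟩).intervalIntegrable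
  have heq : slopeIntegral G p r - deriv G p * (r - p)
      = ∫ s in p..r, (dslope G p s - deriv G p) := by
    rw [intervalIntegral.integral_sub hint intervalIntegrable_const, slopeIntegral,
      intervalIntegral.integral_const, smul_eq_mul, mul_comm]
  rw [heq]
  have := intervalIntegral.norm_integral_le_of_norm_le_const (a := p) (b := r)
    (f := fun s => dslope G p s - deriv G p) (C := K * (r - p)) fun s hs => by
      rw [uIoc_of_le hr.1] at hs
      exact (abs_dslope_sub_deriv_le hdiff hK ⟨hs.1.le, hs.2.trans hr.2⟩).trans
        (by gcongr; exact hs.2)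
  rw [Real.norm_eq_abs, abs_of_nonneg (sub_nonneg.2 hr.1)] at this
  linarith

end SlopeIntegral

section TimeInverse

variable {T V : ℝ → ℝ} {p r₀ : ℝ}

/-- The solution of `r' = V r`, `r 0 = r₀`, read off from a primitive `T` of `-1/V` through
`T (r t) = T r₀ - t`. -/
def timeInverse (T : ℝ → ℝ) (p r₀ t : ℝ) : ℝ := invFunOn T (Ioi p) (T r₀ - t)

theorem strictMonoOn_of_hasDerivAt_neg_inv (hT : ∀ r, p < r → HasDerivAt T (-(V r)⁻¹) r)
    (hV : ∀ r, p < r → V r < 0) : StrictMonoOn T (Ioi p) :=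
  strictMonoOn_of_deriv_pos (convex_Ioi p) (HasDerivAt.continuousOn hT) fun r hr => by
      rw [interior_Ioi] at hr
      rw [(hT r hr).deriv, neg_pos, inv_lt_zero]
      exact hV r hr

theorem exists_mem_Ioo_apply_eq (hcont : ContinuousOn T (Ioi p))
    (hlim : Tendsto T (𝓝[>] p) atBot) {b s : ℝ} (hb : p < b) (hs : s < T b) :
    ∃ r ∈ Ioo p b, T r = s := by
  obtain ⟨a, hTa, hpa, hab⟩ := ((hlim.eventually (eventually_lt_atBot s)).and
    (Ioo_mem_nhdsGT hb)).exists
  obtain ⟨r, hr, hTr⟩ := intermediate_value_Ioo hab.le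
    (hcont.mono fun x hx => lt_of_lt_of_le hpa hx.1) ⟨hTa, hs⟩
  exact ⟨r, ⟨hpa.trans hr.1, hr.2⟩, hTr⟩

theorem invFunOn_mem_Ioo (hmono : StrictMonoOn T (Ioi p)) (hcont : ContinuousOn T (Ioi p))
    (hlim : Tendsto T (𝓝[>] p) atBot) {b s : ℝ} (hb : p < b) (hs : s < T b) :
    invFunOn T (Ioi p) s ∈ Ioo p b ∧ T (invFunOn T (Ioi p) s) = s := by
  obtain ⟨r, hr, hTr⟩ := exists_mem_Ioo_apply_eq hcont hlim hb hs
  obtain ⟨hmem, happ⟩ := invFunOn_pos ⟨r, hr.1, hTr⟩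
  exact ⟨⟨hmem, (hmono.lt_iff_lt hmem hb).1 (by rwa [happ])⟩, happ⟩

theorem invFunOn_apply_self (hmono : StrictMonoOn T (Ioi p)) {r : ℝ} (hr : p < r) :
    invFunOn T (Ioi p) (T r) = r :=
  hmono.injOn.leftInvOn_invFunOn hr

theorem continuousAt_invFunOn (hmono : StrictMonoOn T (Ioi p)) (hcont : ContinuousOn T (Ioi p))
    (hlim : Tendsto T (𝓝[>] p) atBot) {b s : ℝ} (hb : p < b) (hs : s < T b) :
    ContinuousAt (invFunOn T (Ioi p)) s := by
  have hψ := fun s (hs : s < T b) => invFunOn_mem_Ioo hmono hcont hlim hb hs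
  refine StrictMonoOn.continuousAt_of_image_mem_nhds (s := Iio (T b))
    (fun x hx y hy hxy => ?_) (Iio_mem_nhds hs) ?_
  · rw [← hmono.lt_iff_lt (hψ x hx).1.1 (hψ y hy).1.1, (hψ x hx).2, (hψ y hy).2]
    exact hxy
  · refine mem_of_superset (Ioo_mem_nhds (hψ s hs).1.1 (hψ s hs).1.2) fun r hr => ?_
    exact ⟨T r, (hmono.lt_iff_lt hr.1 hb).2 hr.2, invFunOn_apply_self hmono hr.1⟩

variable (hT : ∀ r, p < r → HasDerivAt T (-(V r)⁻¹) r) (hV : ∀ r, p < r → V r < 0)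
include hT hV

theorem timeInverse_spec (hlim : Tendsto T (𝓝[>] p) atBot) (hr₀ : p < r₀) {t : ℝ} (ht : 0 ≤ t) :
    timeInverse T p r₀ t ∈ Ioc p r₀ ∧ T (timeInverse T p r₀ t) = T r₀ - t := by
  have hmono := strictMonoOn_of_hasDerivAt_neg_inv hT hV
  have hb : p < r₀ + 1 := by linarith
  obtain ⟨hmem, happ⟩ := invFunOn_mem_Ioo hmono (HasDerivAt.continuousOn hT) hlim hb
    (by linarith [hmono hr₀ hb (lt_add_one r₀)] : T r₀ - t < T (r₀ + 1))
  exact ⟨⟨hmem.1, (hmono.le_iff_le hmem.1 hr₀).1 (by linarith)⟩, happ⟩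

theorem timeInverse_zero (hr₀ : p < r₀) : timeInverse T p r₀ 0 = r₀ := by
  rw [timeInverse, sub_zero, invFunOn_apply_self (strictMonoOn_of_hasDerivAt_neg_inv hT hV) hr₀]

theorem strictAntiOn_timeInverse (hlim : Tendsto T (𝓝[>] p) atBot) (hr₀ : p < r₀) :
    StrictAntiOn (timeInverse T p r₀) (Ici 0) := by
  intro t₁ ht₁ t₂ ht₂ h
  have h₁ := timeInverse_spec hT hV hlim hr₀ ht₁
  have h₂ := timeInverse_spec hT hV hlim hr₀ ht₂
  rw [← (strictMonoOn_of_hasDerivAt_neg_inv hT hV).lt_iff_lt h₂.1.1 h₁.1.1, h₁.2, h₂.2]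
  linarith

theorem tendsto_timeInverse (hlim : Tendsto T (𝓝[>] p) atBot) (hr₀ : p < r₀) :
    Tendsto (timeInverse T p r₀) atTop (𝓝 p) := by
  refine tendsto_order.2 ⟨fun a ha => (eventually_ge_atTop 0).mono fun t ht =>
    ha.trans (timeInverse_spec hT hV hlim hr₀ ht).1.1, fun b hb => ?_⟩
  obtain ⟨c, hpc, hcb⟩ := exists_between hb
  filter_upwards [eventually_ge_atTop 0, eventually_gt_atTop (T r₀ - T c)] with t ht htc
  have h := timeInverse_spec hT hV hlim hr₀ ht
  refine lt_trans (((strictMonoOn_of_hasDerivAt_neg_inv hT hV).lt_iff_lt h.1.1 hpc).1 ?_) hcb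
  linarith [h.2]

theorem hasDerivAt_timeInverse (hlim : Tendsto T (𝓝[>] p) atBot) (hr₀ : p < r₀) {t : ℝ}
    (ht : 0 ≤ t) : HasDerivAt (timeInverse T p r₀) (V (timeInverse T p r₀ t)) t := by
  have hmono := strictMonoOn_of_hasDerivAt_neg_inv hT hV
  have hcont := HasDerivAt.continuousOn hT
  have hb : p < r₀ + 1 := by linarith
  have hs : T r₀ - t < T (r₀ + 1) := by linarith [hmono hr₀ hb (lt_add_one r₀)]
  have hr := (timeInverse_spec hT hV hlim hr₀ ht).1.1
  have hψ : HasDerivAt (invFunOn T (Ioi p)) (-(V (timeInverse T p r₀ t))⁻¹)⁻¹ (T r₀ - t) :=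
    HasDerivAt.of_local_left_inverse (continuousAt_invFunOn hmono hcont hlim hb hs) (hT _ hr)
      (by simpa using (hV _ hr).ne) <| by
        filter_upwards [Iio_mem_nhds hs] with s hs' using
          (invFunOn_mem_Ioo hmono hcont hlim hb hs').2
  have h := hψ.comp t ((hasDerivAt_id t).const_sub (T r₀))
  rwa [inv_neg, inv_inv, mul_neg_one, neg_neg] at h

theorem eqOn_timeInverse (hlim : Tendsto T (𝓝[>] p) atBot) (hr₀ : p < r₀) {ρ : ℝ → ℝ} {τ : ℝ}
    (hρ₀ : ρ 0 = r₀) (hρ : ∀ t ∈ Icc 0 τ, p < ρ t ∧ HasDerivAt ρ (V (ρ t)) t) :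
    EqOn ρ (timeInverse T p r₀) (Icc 0 τ) := by
  -- `T ∘ ρ` has derivative `-(V ρ)⁻¹ * V ρ = -1`
  have hderiv : ∀ t ∈ Icc 0 τ, HasDerivAt (fun t => T (ρ t) + t) 0 t := fun t ht => by
    have h := ((hT _ (hρ t ht).1).comp t (hρ t ht).2).add (hasDerivAt_id t)
    rwa [neg_mul, inv_mul_cancel₀ (hV _ (hρ t ht).1).ne, neg_add_cancel] at h
  have hconst := constant_of_has_deriv_right_zero
    (fun t ht => (hderiv t ht).continuousAt.continuousWithinAt)
    (fun t ht => (hderiv t (Ico_subset_Icc_self ht)).hasDerivWithinAt)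
  intro t ht
  have h := timeInverse_spec hT hV hlim hr₀ ht.1
  refine (strictMonoOn_of_hasDerivAt_neg_inv hT hV).injOn (hρ t ht).1 h.1.1 ?_
  have := hconst t ht
  simp only [hρ₀, add_zero] at this
  linarith [h.2]

end TimeInverse

theorem abs_exp_sub_one_le_abs_mul_exp_abs (z : ℝ) : |exp z - 1| ≤ |z| * exp |z| := by
  rcases le_total 0 z with hz | hz
  · have h : (1 - z) * exp z ≤ 1 :=
      calc (1 - z) * exp z ≤ exp (-z) * exp z := by gcongr; linarith [add_one_le_exp (-z)]
        _ = 1 := by rw [← exp_add, neg_add_cancel, exp_zero]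
    rw [abs_of_nonneg hz, abs_of_nonneg (by linarith [add_one_le_exp z])]
    linarith
  · rw [abs_of_nonpos hz, abs_of_nonpos (by linarith [exp_le_one_iff.2 hz])]
    nlinarith [add_one_le_exp z, one_le_exp (neg_nonneg.2 hz)]

theorem abs_sub_mul_exp_neg_le {u : ℝ} (hu : 0 ≤ u) (z : ℝ) :
    |u - u * exp (-z)| ≤ u * (|z| * exp |z|) := by
  rw [show u - u * exp (-z) = -(u * (exp (-z) - 1)) by ring, abs_neg, abs_mul, abs_of_nonneg hu]
  simpa only [abs_neg] using mul_le_mul_of_nonneg_left (abs_exp_sub_one_le_abs_mul_exp_abs (-z)) hu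

/-- `x = e^{k y} e^{-k H}` with `H = O(x)` gives `x = e^{k y} + O(e^{2 k y})`, hence
`H = h₀ e^{k y} + O(e^{2 k y})`. -/
theorem exists_abs_log_add_sub_le {k L X η : ℝ} (hk : 0 < k) (hL : 0 ≤ L) :
    ∃ K, ∀ x H h₀ y : ℝ, 0 < x → x ≤ X → |h₀| ≤ η → |H - h₀ * x| ≤ L * x ^ 2 →
      1 / k * log x + H = y → |1 / k * log x + h₀ * exp (k * y) - y| ≤ K * exp (k * y) ^ 2 := by
  set B := η + L * X
  set A := exp (k * B * X)
  refine ⟨A ^ 2 * (η * k * B + L), fun x H h₀ y hx hxX hh₀ hH hy => ?_⟩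
  set u := exp (k * y)
  have hη : 0 ≤ η := (abs_nonneg h₀).trans hh₀
  have hkH : |k * H| ≤ k * B * x := by
    have := abs_sub_abs_le_abs_sub H (h₀ * x)
    rw [abs_mul, abs_of_pos hx] at this
    rw [abs_mul, abs_of_pos hk, mul_assoc]
    refine mul_le_mul_of_nonneg_left ?_ hk.le
    nlinarith [mul_le_mul_of_nonneg_right hh₀ hx.le,
      mul_le_mul_of_nonneg_left hxX (mul_nonneg hL hx.le)]
  have hB : 0 ≤ k * B := nonneg_of_mul_nonneg_left ((abs_nonneg _).trans hkH) hx
  have hexp : exp |k * H| ≤ A := exp_le_exp.2 (hkH.trans (mul_le_mul_of_nonneg_left hxX hB))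
  have hx_eq : x = u * exp (-(k * H)) := by
    rw [← exp_add, ← hy, mul_add, ← mul_assoc, mul_one_div_cancel hk.ne', one_mul,
      add_neg_cancel_right, exp_log hx]
  have hxu : x ≤ u * A := by
    rw [hx_eq]
    exact mul_le_mul_of_nonneg_left ((exp_le_exp.2 (neg_le_abs _)).trans hexp) (exp_pos _).le
  have hux : |u - x| ≤ u * (k * B * x * A) :=
    calc |u - x| = |u - u * exp (-(k * H))| := by rw [← hx_eq]
      _ ≤ u * (|k * H| * exp |k * H|) := abs_sub_mul_exp_neg_le (exp_pos _).le _
      _ ≤ u * (k * B * x * A) := by gcongr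
  calc |1 / k * log x + h₀ * u - y| = |h₀ * (u - x) - (H - h₀ * x)| := by
        rw [← hy]; ring_nf
    _ ≤ |h₀| * |u - x| + |H - h₀ * x| := by rw [← abs_mul]; exact abs_sub _ _
    _ ≤ η * (u * (k * B * (u * A) * A)) + L * (u * A) ^ 2 := by
        refine add_le_add (mul_le_mul hh₀ (hux.trans ?_) (abs_nonneg _) hη)
          (hH.trans (mul_le_mul_of_nonneg_left (pow_le_pow_left₀ hx.le hxu 2) hL))
        gcongr
    _ = A ^ 2 * (η * k * B + L) * u ^ 2 := by ring

theorem abs_sub_mul_le_abs_add_abs {c : ℝ} (hc₀ : 0 ≤ c) (hc₁ : c ≤ 1) (u v : ℝ) :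
    |u - c * v| ≤ |u| + |v| := by
  refine (abs_sub _ _).trans (add_le_add_right ?_ _)
  rw [abs_mul, abs_of_nonneg hc₀]
  exact mul_le_of_le_one_left (abs_nonneg v) hc₁

namespace Stmt4

variable {M a Q : ℝ}

theorem rminus_nonneg (hM : 0 < M) : 0 ≤ rminus M a Q := by
  have h : √(M ^ 2 - (a ^ 2 + Q ^ 2)) ≤ M := by
    rw [Real.sqrt_le_left hM.le]; nlinarith [sq_nonneg a, sq_nonneg Q]
  unfold rminus; linarith

theorem rminus_lt_rplus (hsub : a ^ 2 + Q ^ 2 < M ^ 2) : rminus M a Q < rplus M a Q := by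
  have := Real.sqrt_pos.2 (sub_pos.2 hsub)
  unfold rplus rminus; linarith

theorem rplus_pos (hM : 0 < M) : 0 < rplus M a Q := by
  unfold rplus; positivity

theorem Δ_eq (hsub : a ^ 2 + Q ^ 2 < M ^ 2) (r : ℝ) :
    Δ M a Q r = (r - rplus M a Q) * (r - rminus M a Q) := by
  have := Real.sq_sqrt (sub_nonneg.2 hsub.le)
  unfold Δ rplus rminus; linear_combination this

theorem one_div_two_mul_κplus : 1 / (2 * κplus M a Q) =
    (rplus M a Q ^ 2 + a ^ 2) / (rplus M a Q - rminus M a Q) := by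
  unfold κplus; field_simp

theorem κplus_pos (hM : 0 < M) (hsub : a ^ 2 + Q ^ 2 < M ^ 2) : 0 < κplus M a Q :=
  div_pos (sub_pos.2 (rminus_lt_rplus hsub)) (by have := rplus_pos (a := a) (Q := Q) hM; positivity)

theorem Δ_pos (hsub : a ^ 2 + Q ^ 2 < M ^ 2) {r : ℝ} (hr : rplus M a Q < r) : 0 < Δ M a Q r := by
  rw [Δ_eq hsub]
  exact mul_pos (sub_pos.2 hr) (sub_pos.2 ((rminus_lt_rplus hsub).trans hr))

theorem two_mul_M_mul_sub_sq_pos (hM : 0 < M) (hsub : a ^ 2 + Q ^ 2 < M ^ 2) {r : ℝ}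
    (hr : rminus M a Q < r) : 0 < 2 * M * r - Q ^ 2 := by
  have hΔ := Δ_eq hsub r
  have hp := rplus_pos (a := a) (Q := Q) hM
  have hm := rminus_nonneg (a := a) (Q := Q) hM
  unfold Δ at hΔ
  nlinarith [mul_pos hp (sub_pos.2 hr), mul_nonneg hm (hm.trans hr.le), sq_nonneg a]

def sqrtFactor (M a Q r : ℝ) : ℝ := √((r ^ 2 + a ^ 2) * (2 * M * r - Q ^ 2))

theorem sqrtFactor_pos (hM : 0 < M) (hsub : a ^ 2 + Q ^ 2 < M ^ 2) {r : ℝ}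
    (hr : rminus M a Q < r) : 0 < sqrtFactor M a Q r := by
  have hr0 : 0 < r := lt_of_le_of_lt (rminus_nonneg hM) hr
  unfold sqrtFactor
  have := two_mul_M_mul_sub_sq_pos hM hsub hr
  positivity

theorem contDiffOn_sqrtFactor (hM : 0 < M) (hsub : a ^ 2 + Q ^ 2 < M ^ 2) :
    ContDiffOn ℝ (⊤ : ℕ∞) (sqrtFactor M a Q) (Ioi (rminus M a Q)) := fun r hr =>
  have hr0 : 0 < r := lt_of_le_of_lt (rminus_nonneg hM) hr
  have := two_mul_M_mul_sub_sq_pos hM hsub hr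
  (contDiffAt_sqrt (by positivity)).comp r (by fun_prop) |>.contDiffWithinAt

theorem sqrtFactor_rplus (hsub : a ^ 2 + Q ^ 2 < M ^ 2) :
    sqrtFactor M a Q (rplus M a Q) = rplus M a Q ^ 2 + a ^ 2 := by
  have h := Δ_eq hsub (rplus M a Q)
  rw [sub_self, zero_mul] at h
  unfold Δ at h
  rw [sqrtFactor, show 2 * M * rplus M a Q - Q ^ 2 = rplus M a Q ^ 2 + a ^ 2 by linarith,
    Real.sqrt_mul_self (by positivity)]

/-- `-1 / V = σ² / (√(…) Δ) = (G₀ r - sin² θ G₁ r) / (r - r₊)`, with numerators `G₀, G₁` smooth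
across `r₊`. -/
def G₀ (M a Q r : ℝ) : ℝ := (r ^ 2 + a ^ 2) ^ 2 / (sqrtFactor M a Q r * (r - rminus M a Q))

def G₁ (M a Q r : ℝ) : ℝ := a ^ 2 * (r - rplus M a Q) / sqrtFactor M a Q r

theorem contDiffOn_G₀ (hM : 0 < M) (hsub : a ^ 2 + Q ^ 2 < M ^ 2) :
    ContDiffOn ℝ (⊤ : ℕ∞) (G₀ M a Q) (Ioi (rminus M a Q)) :=
  (contDiffOn_id.pow 2 |>.add contDiffOn_const |>.pow 2).div
    ((contDiffOn_sqrtFactor hM hsub).mul (contDiffOn_id.sub contDiffOn_const))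
    fun _ hr => (mul_pos (sqrtFactor_pos hM hsub hr) (sub_pos.2 hr)).ne'

theorem contDiffOn_G₁ (hM : 0 < M) (hsub : a ^ 2 + Q ^ 2 < M ^ 2) :
    ContDiffOn ℝ (⊤ : ℕ∞) (G₁ M a Q) (Ioi (rminus M a Q)) :=
  (contDiffOn_const.mul (contDiffOn_id.sub contDiffOn_const)).div (contDiffOn_sqrtFactor hM hsub)
    fun _ hr => (sqrtFactor_pos hM hsub hr).ne'

theorem G₀_rplus (hM : 0 < M) (hsub : a ^ 2 + Q ^ 2 < M ^ 2) :
    G₀ M a Q (rplus M a Q) = 1 / (2 * κplus M a Q) := by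
  have hpm := sub_pos.2 (rminus_lt_rplus hsub)
  have hp := rplus_pos (a := a) (Q := Q) hM
  rw [G₀, sqrtFactor_rplus hsub, one_div_two_mul_κplus]
  field_simp

theorem G₁_rplus : G₁ M a Q (rplus M a Q) = 0 := by simp [G₁]

theorem sigma2_pos (hM : 0 < M) (hsub : a ^ 2 + Q ^ 2 < M ^ 2) (θ : ℝ) {r : ℝ}
    (hr : rplus M a Q < r) : 0 < sigma2 M a Q r θ := by
  have hΔ := Δ_pos hsub hr
  -- `Δ = r² + a² - (2Mr - Q²) < r² + a²`, so `σ² > (r² + a²) r²`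
  have hℓ := two_mul_M_mul_sub_sq_pos hM hsub ((rminus_lt_rplus hsub).trans hr)
  have hr0 : 0 < r := (rplus_pos hM).trans hr
  unfold sigma2
  unfold Δ at hΔ ⊢
  nlinarith [mul_le_mul_of_nonneg_left (sin_sq_le_one θ) (mul_nonneg (sq_nonneg a) hΔ.le),
    sq_nonneg a, mul_pos hr0 hr0, mul_nonneg (sq_nonneg a) hℓ.le]

theorem V_neg (hM : 0 < M) (hsub : a ^ 2 + Q ^ 2 < M ^ 2) (θ r : ℝ) (hr : rplus M a Q < r) :
    V M a Q θ r < 0 := by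
  rw [V, neg_mul, neg_div, neg_lt_zero, ← sqrtFactor]
  exact div_pos (mul_pos (sqrtFactor_pos hM hsub ((rminus_lt_rplus hsub).trans hr))
    (Δ_pos hsub hr)) (sigma2_pos hM hsub θ hr)

theorem neg_inv_V (hM : 0 < M) (hsub : a ^ 2 + Q ^ 2 < M ^ 2) (θ : ℝ) {r : ℝ}
    (hr : rplus M a Q < r) :
    -(V M a Q θ r)⁻¹ = (G₀ M a Q r - sin θ ^ 2 * G₁ M a Q r) / (r - rplus M a Q) := by
  have hm := rminus_lt_rplus hsub
  have hS := (sqrtFactor_pos hM hsub (hm.trans hr)).ne'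
  have hσ := (sigma2_pos hM hsub θ hr).ne'
  have hrp := (sub_pos.2 hr).ne'
  have hrm := (sub_pos.2 (hm.trans hr)).ne'
  rw [V, ← sqrtFactor, G₀, G₁, Δ_eq hsub, sigma2, Δ_eq hsub]
  field_simp

def regTime (M a Q θ r : ℝ) : ℝ :=
  slopeIntegral (G₀ M a Q) (rplus M a Q) r - sin θ ^ 2 * slopeIntegral (G₁ M a Q) (rplus M a Q) r

/-- A primitive of `-1 / V`: the solution starting at `r₀` reaches `r` at time
`fallTime θ r₀ - fallTime θ r`. -/
def fallTime (M a Q θ r : ℝ) : ℝ :=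
  1 / (2 * κplus M a Q) * log (r - rplus M a Q) + regTime M a Q θ r

def regSlope (M a Q θ : ℝ) : ℝ :=
  deriv (G₀ M a Q) (rplus M a Q) - sin θ ^ 2 * deriv (G₁ M a Q) (rplus M a Q)

theorem contDiff_regSlope : ContDiff ℝ (⊤ : ℕ∞) (regSlope M a Q) := by
  unfold regSlope; fun_prop

theorem hasDerivAt_regTime (hM : 0 < M) (hsub : a ^ 2 + Q ^ 2 < M ^ 2) (θ : ℝ) {r : ℝ}
    (hr : rminus M a Q < r) :
    HasDerivAt (regTime M a Q θ) (dslope (G₀ M a Q) (rplus M a Q) r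
      - sin θ ^ 2 * dslope (G₁ M a Q) (rplus M a Q) r) r :=
  (hasDerivAt_slopeIntegral ((contDiffOn_G₀ hM hsub).of_le (WithTop.coe_le_coe.2 le_top))
    (rminus_lt_rplus hsub) hr).sub
    ((hasDerivAt_slopeIntegral ((contDiffOn_G₁ hM hsub).of_le (WithTop.coe_le_coe.2 le_top))
      (rminus_lt_rplus hsub) hr).const_mul _)

theorem hasDerivAt_fallTime (hM : 0 < M) (hsub : a ^ 2 + Q ^ 2 < M ^ 2) (θ r : ℝ)
    (hr : rplus M a Q < r) : HasDerivAt (fallTime M a Q θ) (-(V M a Q θ r)⁻¹) r := by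
  have hrp := (sub_pos.2 hr).ne'
  have h : HasDerivAt (fallTime M a Q θ) (1 / (2 * κplus M a Q) * (1 / (r - rplus M a Q))
      + (dslope (G₀ M a Q) (rplus M a Q) r - sin θ ^ 2 * dslope (G₁ M a Q) (rplus M a Q) r)) r :=
    ((((hasDerivAt_id r).sub_const _).log hrp).const_mul _).add
      (hasDerivAt_regTime hM hsub θ ((rminus_lt_rplus hsub).trans hr))
  refine h.congr_deriv ?_
  rw [neg_inv_V hM hsub θ hr, dslope_of_ne _ hr.ne', dslope_of_ne _ hr.ne', slope_def_field,
    slope_def_field, G₀_rplus hM hsub, G₁_rplus]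
  field_simp
  ring

theorem tendsto_fallTime (hM : 0 < M) (hsub : a ^ 2 + Q ^ 2 < M ^ 2) (θ : ℝ) :
    Tendsto (fallTime M a Q θ) (𝓝[>] rplus M a Q) atBot := by
  have hκ : 0 < 1 / (2 * κplus M a Q) := by have := κplus_pos hM hsub; positivity
  have hsub0 : Tendsto (fun r => r - rplus M a Q) (𝓝[>] rplus M a Q) (𝓝[>] 0) :=
    tendsto_nhdsWithin_iff.2 ⟨((continuous_sub_right _).tendsto' _ _ (sub_self _)).mono_left
      nhdsWithin_le_nhds, eventually_nhdsWithin_of_forall fun _ hr => sub_pos.2 (mem_Ioi.1 hr)⟩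
  exact ((tendsto_log_nhdsGT_zero.comp hsub0).const_mul_atBot hκ).atBot_add
    ((hasDerivAt_regTime hM hsub θ (rminus_lt_rplus hsub)).continuousAt.tendsto.mono_left
      nhdsWithin_le_nhds)

theorem contDiffOn_fallTime (hM : 0 < M) (hsub : a ^ 2 + Q ^ 2 < M ^ 2) :
    ContDiffOn ℝ (⊤ : ℕ∞) (fun q : ℝ × ℝ => fallTime M a Q q.1 q.2)
      (univ ×ˢ Ioi (rplus M a Q)) := by
  have hI : ∀ {G : ℝ → ℝ}, ContDiffOn ℝ (⊤ : ℕ∞) G (Ioi (rminus M a Q)) →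
      ContDiffOn ℝ (⊤ : ℕ∞) (fun q : ℝ × ℝ => slopeIntegral G (rplus M a Q) q.2)
        (univ ×ˢ Ioi (rplus M a Q)) := fun hG =>
    (contDiffOn_slopeIntegral hG (rminus_lt_rplus hsub)).comp contDiffOn_snd fun q hq => hq.2
  refine ContDiffOn.add (contDiffOn_const.mul ?_)
    ((hI (contDiffOn_G₀ hM hsub)).sub (((contDiff_sin.comp contDiff_fst).pow 2).contDiffOn.mul
      (hI (contDiffOn_G₁ hM hsub))))
  exact fun q hq => ((contDiffAt_log.2 (sub_pos.2 hq.2).ne').comp q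
    (contDiffAt_snd.sub contDiffAt_const)).contDiffWithinAt

theorem exists_abs_regTime_sub_le (hM : 0 < M) (hsub : a ^ 2 + Q ^ 2 < M ^ 2) (b : ℝ) :
    ∃ L, 0 ≤ L ∧ ∀ θ, ∀ r ∈ Icc (rplus M a Q) b,
      |regTime M a Q θ r - regSlope M a Q θ * (r - rplus M a Q)| ≤ L * (r - rplus M a Q) ^ 2 := by
  obtain ⟨L₀, hL₀⟩ := exists_abs_slopeIntegral_sub_le ((contDiffOn_G₀ hM hsub).of_le
    (WithTop.coe_le_coe.2 le_top)) (rminus_lt_rplus hsub) b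
  obtain ⟨L₁, hL₁⟩ := exists_abs_slopeIntegral_sub_le ((contDiffOn_G₁ hM hsub).of_le
    (WithTop.coe_le_coe.2 le_top)) (rminus_lt_rplus hsub) b
  refine ⟨|L₀| + |L₁|, by positivity, fun θ r hr => ?_⟩
  have h := abs_sub_mul_le_abs_add_abs (sq_nonneg (sin θ)) (sin_sq_le_one θ)
    (slopeIntegral (G₀ M a Q) (rplus M a Q) r - deriv (G₀ M a Q) (rplus M a Q) * (r - rplus M a Q))
    (slopeIntegral (G₁ M a Q) (rplus M a Q) r - deriv (G₁ M a Q) (rplus M a Q) * (r - rplus M a Q))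
  calc _ = _ := by rw [regTime, regSlope]; ring_nf
    _ ≤ _ := h
    _ ≤ |L₀| * (r - rplus M a Q) ^ 2 + |L₁| * (r - rplus M a Q) ^ 2 := add_le_add
        ((hL₀ r hr).trans (by gcongr; exact le_abs_self _))
        ((hL₁ r hr).trans (by gcongr; exact le_abs_self _))
    _ = _ := by ring

theorem exists_abs_asymptotics_le (hM : 0 < M) (hsub : a ^ 2 + Q ^ 2 < M ^ 2) {r₁ r₂ : ℝ}
    (hr₁ : rplus M a Q < r₁) :
    ∃ C, 0 < C ∧ ∀ t, 0 ≤ t → ∀ θ ∈ Icc 0 π, ∀ r₀ ∈ Icc r₁ r₂,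
      |1 / (2 * κplus M a Q) *
          log (timeInverse (fallTime M a Q θ) (rplus M a Q) r₀ t - rplus M a Q) + t
        + regSlope M a Q θ * exp (2 * κplus M a Q * fallTime M a Q θ r₀)
          * exp (-2 * κplus M a Q * t) - fallTime M a Q θ r₀|
        ≤ C * exp (-4 * κplus M a Q * t) := by
  set p := rplus M a Q
  set κ := κplus M a Q
  have hκ : 0 < κ := κplus_pos hM hsub
  obtain ⟨L, hL, hreg⟩ := exists_abs_regTime_sub_le hM hsub r₂
  obtain ⟨K, hK⟩ := exists_abs_log_add_sub_le (X := r₂ - p)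
    (η := |deriv (G₀ M a Q) p| + |deriv (G₁ M a Q) p|) (by positivity : 0 < 2 * κ) hL
  obtain ⟨B, hB⟩ := (isCompact_Icc.prod isCompact_Icc).exists_bound_of_continuousOn
    ((contDiffOn_fallTime hM hsub).continuousOn.mono
      (prod_mono (subset_univ (Icc 0 π)) fun r hr => hr₁.trans_le hr.1))
  refine ⟨(|K| + 1) * exp (4 * κ * B), by positivity, fun t ht θ hθ r₀ hr₀ => ?_⟩
  obtain ⟨hr, hT⟩ := timeInverse_spec (hasDerivAt_fallTime hM hsub θ) (V_neg hM hsub θ)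
    (tendsto_fallTime hM hsub θ) (hr₁.trans_le hr₀.1) ht
  set r := timeInverse (fallTime M a Q θ) p r₀ t
  set F := fallTime M a Q θ r₀
  have hF : F ≤ B := (le_abs_self F).trans (hB (θ, r₀) ⟨hθ, hr₀⟩)
  have key := hK (r - p) (regTime M a Q θ r) (regSlope M a Q θ) (F - t) (sub_pos.2 hr.1)
    (by linarith [hr.2, hr₀.2])
    (abs_sub_mul_le_abs_add_abs (sq_nonneg (sin θ)) (sin_sq_le_one θ) _ _)
    (hreg θ r ⟨hr.1.le, hr.2.trans hr₀.2⟩) hT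
  calc _ = |1 / (2 * κ) * log (r - p) + regSlope M a Q θ * exp (2 * κ * (F - t)) - (F - t)| := by
        rw [mul_assoc, ← exp_add]; ring_nf
    _ ≤ K * exp (2 * κ * (F - t)) ^ 2 := key
    _ ≤ (|K| + 1) * exp (2 * κ * (F - t)) ^ 2 := by gcongr; linarith [le_abs_self K]
    _ = (|K| + 1) * exp (4 * κ * F + -4 * κ * t) := by rw [sq, ← exp_add]; ring_nf
    _ ≤ (|K| + 1) * exp (4 * κ * B + -4 * κ * t) := by gcongr
    _ = (|K| + 1) * exp (4 * κ * B) * exp (-4 * κ * t) := by rw [exp_add]; ring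

theorem collapse_ode_global_asymptotics_general (M a Q : ℝ) (hM : 0 < M)
    (hsub : a ^ 2 + Q ^ 2 < M ^ 2) :
    ∃ rr : ℝ → ℝ → ℝ → ℝ,
      (∀ θ ∈ Set.Icc (0 : ℝ) Real.pi, ∀ r0 : ℝ, rplus M a Q < r0 →
        -- `rr · θ r0` solves the ODE for all t ≥ 0 with initial value r0 …
        rr 0 θ r0 = r0 ∧
        (∀ t : ℝ, 0 ≤ t → rplus M a Q < rr t θ r0) ∧
        (∀ t : ℝ, 0 ≤ t →
          HasDerivAt (fun t' => rr t' θ r0) (V M a Q θ (rr t θ r0)) t) ∧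
        -- … is strictly decreasing and tends to r₊, …
        StrictAntiOn (fun t => rr t θ r0) (Set.Ici 0) ∧
        Filter.Tendsto (fun t => rr t θ r0) Filter.atTop (nhds (rplus M a Q)) ∧
        -- … and is THE (maximal) solution : any solution on [0,T] agrees with it.
        (∀ (ρ : ℝ → ℝ) (T : ℝ), 0 ≤ T → ρ 0 = r0 →
          (∀ t ∈ Set.Icc 0 T, rplus M a Q < ρ t ∧ HasDerivAt ρ (V M a Q θ (ρ t)) t) →
          ∀ t ∈ Set.Icc 0 T, ρ t = rr t θ r0)) ∧
      -- asymptotic behaviour with smooth coefficients Ĉ₁, Ĉ₂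
      ∃ C1 C2 : ℝ → ℝ → ℝ,
        ContDiffOn ℝ (⊤ : ℕ∞) (fun p : ℝ × ℝ => C1 p.1 p.2)
          (Set.Icc 0 Real.pi ×ˢ Set.Ioi (rplus M a Q)) ∧
        ContDiffOn ℝ (⊤ : ℕ∞) (fun p : ℝ × ℝ => C2 p.1 p.2)
          (Set.Icc 0 Real.pi ×ˢ Set.Ioi (rplus M a Q)) ∧
        ∀ r1 r2 : ℝ, rplus M a Q < r1 → r1 ≤ r2 →
          ∃ C : ℝ, 0 < C ∧
            ∀ t : ℝ, 0 ≤ t → ∀ θ ∈ Set.Icc (0 : ℝ) Real.pi, ∀ r0 ∈ Set.Icc r1 r2,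
              |(1 / (2 * κplus M a Q)) * Real.log (rr t θ r0 - rplus M a Q)
                  + t + C1 θ r0 * Real.exp (-2 * κplus M a Q * t) - C2 θ r0|
                ≤ C * Real.exp (-4 * κplus M a Q * t) := by
  have hT θ := hasDerivAt_fallTime hM hsub θ
  have hV θ := V_neg hM hsub θ
  have hlim θ := tendsto_fallTime hM hsub θ
  have hdom : Icc 0 π ×ˢ Ioi (rplus M a Q) ⊆ univ ×ˢ Ioi (rplus M a Q) :=
    prod_mono (subset_univ _) subset_rfl
  refine ⟨fun t θ r₀ => timeInverse (fallTime M a Q θ) (rplus M a Q) r₀ t,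
    fun θ _ r₀ hr₀ => ⟨timeInverse_zero (hT θ) (hV θ) hr₀,
      fun t ht => (timeInverse_spec (hT θ) (hV θ) (hlim θ) hr₀ ht).1.1,
      fun t ht => hasDerivAt_timeInverse (hT θ) (hV θ) (hlim θ) hr₀ ht,
      strictAntiOn_timeInverse (hT θ) (hV θ) (hlim θ) hr₀,
      tendsto_timeInverse (hT θ) (hV θ) (hlim θ) hr₀,
      fun ρ τ _ hρ₀ hρ t ht => eqOn_timeInverse (hT θ) (hV θ) (hlim θ) hr₀ hρ₀ hρ ht⟩,
    fun θ r₀ => regSlope M a Q θ * exp (2 * κplus M a Q * fallTime M a Q θ r₀),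
    fun θ r₀ => fallTime M a Q θ r₀, ?_, (contDiffOn_fallTime hM hsub).mono hdom,
    fun r₁ r₂ hr₁ _ => exists_abs_asymptotics_le hM hsub hr₁⟩
  exact ((contDiff_regSlope.comp contDiff_fst).contDiffOn.mul
    (contDiffOn_const.mul (contDiffOn_fallTime hM hsub)).exp).mono hdom

theorem collapse_ode_global_asymptotics (M a Q : ℝ) (hM : 0 < M) (ha : 0 < a)
    (hsub : a ^ 2 + Q ^ 2 < M ^ 2) :
    ∃ rr : ℝ → ℝ → ℝ → ℝ,
      (∀ θ ∈ Set.Icc (0 : ℝ) Real.pi, ∀ r0 : ℝ, rplus M a Q < r0 →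
        -- `rr · θ r0` solves the ODE for all t ≥ 0 with initial value r0 …
        rr 0 θ r0 = r0 ∧
        (∀ t : ℝ, 0 ≤ t → rplus M a Q < rr t θ r0) ∧
        (∀ t : ℝ, 0 ≤ t →
          HasDerivAt (fun t' => rr t' θ r0) (V M a Q θ (rr t θ r0)) t) ∧
        -- … is strictly decreasing and tends to r₊, …
        StrictAntiOn (fun t => rr t θ r0) (Set.Ici 0) ∧
        Filter.Tendsto (fun t => rr t θ r0) Filter.atTop (nhds (rplus M a Q)) ∧
        -- … and is THE (maximal) solution : any solution on [0,T] agrees with it.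
        (∀ (ρ : ℝ → ℝ) (T : ℝ), 0 ≤ T → ρ 0 = r0 →
          (∀ t ∈ Set.Icc 0 T, rplus M a Q < ρ t ∧ HasDerivAt ρ (V M a Q θ (ρ t)) t) →
          ∀ t ∈ Set.Icc 0 T, ρ t = rr t θ r0)) ∧
      -- asymptotic behaviour with smooth coefficients Ĉ₁, Ĉ₂
      ∃ C1 C2 : ℝ → ℝ → ℝ,
        ContDiffOn ℝ (⊤ : ℕ∞) (fun p : ℝ × ℝ => C1 p.1 p.2)
          (Set.Icc 0 Real.pi ×ˢ Set.Ioi (rplus M a Q)) ∧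
        ContDiffOn ℝ (⊤ : ℕ∞) (fun p : ℝ × ℝ => C2 p.1 p.2)
          (Set.Icc 0 Real.pi ×ˢ Set.Ioi (rplus M a Q)) ∧
        ∀ r1 r2 : ℝ, rplus M a Q < r1 → r1 ≤ r2 →
          ∃ C : ℝ, 0 < C ∧
            ∀ t : ℝ, 0 ≤ t → ∀ θ ∈ Set.Icc (0 : ℝ) Real.pi, ∀ r0 ∈ Set.Icc r1 r2,
              |(1 / (2 * κplus M a Q)) * Real.log (rr t θ r0 - rplus M a Q)
                  + t + C1 θ r0 * Real.exp (-2 * κplus M a Q * t) - C2 θ r0|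
                ≤ C * Real.exp (-4 * κplus M a Q * t) :=
  collapse_ode_global_asymptotics_general M a Q hM hsub

end Stmt4
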